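/- Bounds among notions of heat: if the environment B with Hamiltonian H_B starts in the Gibbs state γ_B(β) at temperature T = 1/β and ends in an arbitrary state ρ_B', then T·ΔS_B ≤ ΔQ ≤ ΔE_B, where ΔS_B = S(ρ_B') - S(γ_B(β)), ΔE_B = E(ρ_B') - E(γ_B(β)), and ΔQ = B(ρ_B') - B(γ_B(β)) is the change of bound energy. -/

import Mathlib

open Matrix BigOperators
open scoped ComplexOrder

noncomputable section

variable {n : Type*} [Fintype n] [DecidableEq n]

/-- A density matrix: positive semidefinite with unit trace. -/
def IsDensity (ρ : Matrix n n ℂ) : Prop := ρ.PosSemidef ∧ ρ.trace = 1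

/-- Von Neumann entropy via eigenvalues. -/
noncomputable def vnEntropy (ρ : Matrix n n ℂ) : ℝ :=
  if h : ρ.IsHermitian then ∑ i, Real.negMulLog (h.eigenvalues i) else 0

/-- Energy of a state with respect to a Hamiltonian. -/
noncomputable def energy (H ρ : Matrix n n ℂ) : ℝ := ((H * ρ).trace).re

/-- Gibbs state at inverse temperature β. -/
noncomputable def gibbs (H : Matrix n n ℂ) (β : ℝ) : Matrix n n ℂ :=
  ((NormedSpace.exp (-(β : ℂ) • H)).trace)⁻¹ • NormedSpace.exp (-(β : ℂ) • H)

/-- Bound energy: minimal energy among density matrices with the same entropy. -/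
noncomputable def boundEnergy (H ρ : Matrix n n ℂ) : ℝ :=
  sInf {e | ∃ σ : Matrix n n ℂ, IsDensity σ ∧ vnEntropy σ = vnEntropy ρ ∧ energy H σ = e}

/-- Free energy. -/
noncomputable def freeEnergy (H ρ : Matrix n n ℂ) : ℝ := energy H ρ - boundEnergy H ρ

/-- Matrix logarithm of a Hermitian matrix via spectral decomposition. -/
noncomputable def mlog (A : Matrix n n ℂ) : Matrix n n ℂ :=
  if h : A.IsHermitian then
    (h.eigenvectorUnitary : Matrix n n ℂ) *
      Matrix.diagonal (fun i => (Real.log (h.eigenvalues i) : ℂ)) *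
      star (h.eigenvectorUnitary : Matrix n n ℂ)
  else 0

/-- Quantum relative entropy D(ρ‖σ) = Tr(ρ log ρ - ρ log σ). -/
noncomputable def relEntropy (ρ σ : Matrix n n ℂ) : ℝ :=
  ((ρ * (mlog ρ - mlog σ)).trace).re

/-- Partial trace over the second factor. -/
noncomputable def margA {nA nB : Type*} [Fintype nA] [Fintype nB]
    (ρ : Matrix (nA × nB) (nA × nB) ℂ) : Matrix nA nA ℂ :=
  fun i i' => ∑ j, ρ (i, j) (i', j)

/-- Partial trace over the first factor. -/
noncomputable def margB {nA nB : Type*} [Fintype nA] [Fintype nB]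
    (ρ : Matrix (nA × nB) (nA × nB) ℂ) : Matrix nB nB ℂ :=
  fun j j' => ∑ i, ρ (i, j) (i, j')

/-!
Every state obeys the Gibbs variational principle `S(σ) ≤ β E(σ) + log Z`, with equality at
`γ(β)`. To see it, write `σ = ∑ pᵢ |sᵢ⟩⟨sᵢ|` and `H = ∑ λⱼ |hⱼ⟩⟨hⱼ|`: the overlaps
`|⟨hⱼ|sᵢ⟩|²` form a doubly stochastic matrix `C`, so `E(σ) = ∑ Cⱼᵢ pᵢ λⱼ`, and averaging the
pointwise Gibbs inequality `-p log p ≤ -p log q + q - p` with weights `C`, where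
`qⱼ = e^{-βλⱼ}/Z`, gives the principle.

Consequently `(S(ρ) - log Z)/β ≤ B(ρ) ≤ E(ρ)` for every state `ρ`: the line
`S ↦ (S - log Z)/β` lies below the thermal boundary and touches it at `S(γ(β))`, so
`B(γ(β)) = E(γ(β))`. The upper heat bound is then nonnegativity of the free energy at `ρ'`, and
the lower one is the lower bound at `ρ'` minus the equality at `γ(β)`.
-/

theorem Real.negMulLog_le (p : ℝ) {q : ℝ} (hp : 0 ≤ p) (hq : 0 < q) :
    negMulLog p ≤ -p * log q + q - p := by
  calc negMulLog p = q * negMulLog (p / q) + p / q * negMulLog q := by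
        rw [← negMulLog_mul, div_mul_cancel₀ p hq.ne']
    _ ≤ q * (1 - p / q) + p / q * negMulLog q := by
        gcongr
        exact negMulLog_le_one_sub_self (div_nonneg hp hq.le)
    _ = -p * log q + q - p := by
        rw [negMulLog]
        field_simp
        ring

namespace Matrix

theorem isHermitian_unitary_conj_diagonal (U : unitaryGroup n ℂ) (μ : n → ℝ) :
    ((U : Matrix n n ℂ) * diagonal (fun i => (μ i : ℂ)) * star (U : Matrix n n ℂ)).IsHermitian :=
  isHermitian_mul_mul_conjTranspose _ (isHermitian_diagonal_iff.2 fun _ => Complex.conj_ofReal _)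

theorem IsHermitian.eq_unitary_conj_diagonal {A : Matrix n n ℂ} (hA : A.IsHermitian) :
    A = (hA.eigenvectorUnitary : Matrix n n ℂ) * diagonal (fun i => (hA.eigenvalues i : ℂ)) *
      star (hA.eigenvectorUnitary : Matrix n n ℂ) := by
  conv_lhs => rw [hA.spectral_theorem]
  rfl

open Polynomial in
theorem IsHermitian.map_eigenvalues_eq_of_eq_unitary_conj_diagonal {A : Matrix n n ℂ}
    (hA : A.IsHermitian) (U : unitaryGroup n ℂ) (μ : n → ℝ)
    (h : A = U * diagonal (fun i => (μ i : ℂ)) * star (U : Matrix n n ℂ)) :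
    Finset.univ.val.map hA.eigenvalues = Finset.univ.val.map μ := by
  have hcharpoly : A.charpoly = ∏ i, (X - C (μ i : ℂ)) := by
    rw [h, charpoly_mul_comm, ← mul_assoc, Unitary.coe_star_mul_self, one_mul, charpoly_diagonal]
  have hroots := hA.roots_charpoly_eq_eigenvalues
  rw [hcharpoly, roots_prod _ _ (by simp [Finset.prod_ne_zero_iff, X_sub_C_ne_zero])] at hroots
  simpa [Multiset.map_map, Function.comp_def] using (congrArg (Multiset.map RCLike.re) hroots).symm

theorem trace_unitary_conj (U : unitaryGroup n ℂ) (M : Matrix n n ℂ) :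
    ((U : Matrix n n ℂ) * M * star (U : Matrix n n ℂ)).trace = M.trace := by
  rw [trace_mul_cycle, Unitary.coe_star_mul_self, one_mul]

theorem exp_unitary_conj_diagonal (U : unitaryGroup n ℂ) (c : n → ℂ) :
    NormedSpace.exp ((U : Matrix n n ℂ) * diagonal c * star (U : Matrix n n ℂ)) =
      U * diagonal (fun i => Complex.exp (c i)) * star (U : Matrix n n ℂ) := by
  have hinv : (U : Matrix n n ℂ)⁻¹ = star (U : Matrix n n ℂ) :=
    inv_eq_right_inv (Unitary.coe_mul_star_self U)
  rw [← hinv, exp_conj _ _ Unitary.isUnit_coe, exp_diagonal, Pi.exp_def]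
  simp_rw [Complex.exp_eq_exp_ℂ]

theorem trace_diagonal_mul_mul_diagonal_mul_star (W : Matrix n n ℂ) (c p : n → ℝ) :
    (diagonal (fun i => (c i : ℂ)) * W * diagonal (fun i => (p i : ℂ)) * star W).trace =
      ((∑ j, ∑ i, c j * p i * Complex.normSq (W j i) : ℝ) : ℂ) := by
  push_cast
  refine Finset.sum_congr rfl fun j _ => ?_
  rw [diag_apply, mul_apply]
  refine Finset.sum_congr rfl fun i _ => ?_
  rw [mul_diagonal, diagonal_mul, star_apply, Complex.star_def, Complex.normSq_eq_conj_mul_self]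
  ring

theorem of_normSq_mem_doublyStochastic (U : unitaryGroup n ℂ) :
    of (fun i j => Complex.normSq ((U : Matrix n n ℂ) i j)) ∈ doublyStochastic ℝ n := by
  have hrow (i : n) : ∑ j, Complex.normSq ((U : Matrix n n ℂ) i j) = 1 := by
    have h := congrFun (congrFun (mem_unitaryGroup_iff.mp U.2) i) i
    simp only [mul_apply, star_apply, Complex.star_def, Complex.mul_conj, one_apply_eq] at h
    exact_mod_cast h
  have hcol (j : n) : ∑ i, Complex.normSq ((U : Matrix n n ℂ) i j) = 1 := by
    have h := congrFun (congrFun (mem_unitaryGroup_iff'.mp U.2) j) j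
    simp only [mul_apply, star_apply, Complex.star_def, mul_comm ((starRingEnd ℂ) _),
      Complex.mul_conj, one_apply_eq] at h
    exact_mod_cast h
  exact mem_doublyStochastic_iff_sum.2 ⟨fun i j => Complex.normSq_nonneg _, hrow, hcol⟩

theorem sum_negMulLog_le_of_mem_doublyStochastic {C : Matrix n n ℝ}
    (hC : C ∈ doublyStochastic ℝ n) {p q : n → ℝ} (hp : ∀ i, 0 ≤ p i) (hq : ∀ j, 0 < q j)
    (hpq : ∑ i, p i = ∑ j, q j) :
    ∑ i, Real.negMulLog (p i) ≤ -∑ j, ∑ i, C j i * p i * Real.log (q j) := by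
  have hrow (j : n) : ∑ i, C j i * q j = q j := by
    rw [← Finset.sum_mul, sum_row_of_mem_doublyStochastic hC, one_mul]
  have hcol (i : n) : ∑ j, C j i * p i = p i := by
    rw [← Finset.sum_mul, sum_col_of_mem_doublyStochastic hC, one_mul]
  calc ∑ i, Real.negMulLog (p i) = ∑ j, ∑ i, C j i * Real.negMulLog (p i) := by
        rw [Finset.sum_comm]
        simp only [← Finset.sum_mul, sum_col_of_mem_doublyStochastic hC, one_mul]
    _ ≤ ∑ j, ∑ i, C j i * (-p i * Real.log (q j) + q j - p i) := by
        gcongr with j _ i _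
        · exact nonneg_of_mem_doublyStochastic hC
        · exact Real.negMulLog_le _ (hp i) (hq j)
    _ = -∑ j, ∑ i, C j i * p i * Real.log (q j) + (∑ j, q j - ∑ i, p i) := by
        simp only [mul_sub, mul_add, Finset.sum_sub_distrib, Finset.sum_add_distrib, hrow]
        rw [Finset.sum_comm (f := fun j i => C j i * p i), Finset.sum_congr rfl fun i _ => hcol i]
        simp only [mul_neg, neg_mul, Finset.sum_neg_distrib, mul_assoc]
        ring
    _ = -∑ j, ∑ i, C j i * p i * Real.log (q j) := by rw [hpq, sub_self, add_zero]

end Matrix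

theorem IsDensity.nonempty {m : Type*} [Fintype m] {ρ : Matrix m m ℂ} (hρ : IsDensity ρ) :
    Nonempty m := by
  by_contra h
  have : IsEmpty m := not_nonempty_iff.mp h
  simpa [trace] using hρ.2

theorem IsDensity.sum_eigenvalues_eq_one {ρ : Matrix n n ℂ} (hρ : IsDensity ρ) :
    ∑ i, hρ.1.isHermitian.eigenvalues i = 1 := by
  have h := hρ.1.isHermitian.trace_eq_sum_eigenvalues.symm.trans hρ.2
  rw [← RCLike.ofReal_sum] at h
  exact RCLike.ofReal_inj.mp (h.trans RCLike.ofReal_one.symm)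

theorem vnEntropy_unitary_conj_diagonal (U : unitaryGroup n ℂ) (μ : n → ℝ) :
    vnEntropy ((U : Matrix n n ℂ) * diagonal (fun i => (μ i : ℂ)) * star (U : Matrix n n ℂ)) =
      ∑ i, Real.negMulLog (μ i) := by
  have hA := isHermitian_unitary_conj_diagonal U μ
  rw [vnEntropy, dif_pos hA]
  have h := congrArg (fun s => (s.map Real.negMulLog).sum)
    (hA.map_eigenvalues_eq_of_eq_unitary_conj_diagonal U μ rfl)
  simp only [Multiset.map_map] at h
  exact h

theorem energy_eq_sum_normSq {H σ : Matrix n n ℂ} (hH : H.IsHermitian) (hσ : σ.IsHermitian) :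
    energy H σ = ∑ j, ∑ i, hH.eigenvalues j * hσ.eigenvalues i *
      Complex.normSq
        ((star hH.eigenvectorUnitary * hσ.eigenvectorUnitary : unitaryGroup n ℂ) j i) := by
  rw [energy, ← Complex.ofReal_re (∑ j, ∑ i, _), ← trace_diagonal_mul_mul_diagonal_mul_star]
  conv_lhs => rw [hH.eq_unitary_conj_diagonal, hσ.eq_unitary_conj_diagonal]
  simp only [Submonoid.coe_mul, Unitary.coe_star, star_mul, star_star, Matrix.mul_assoc]
  rw [trace_mul_comm]
  simp only [Matrix.mul_assoc]

section Gibbs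

variable {H : Matrix n n ℂ} (hH : H.IsHermitian) (β : ℝ)

def partitionFunction : ℝ := ∑ i, Real.exp (-(β * hH.eigenvalues i))

def gibbsDistribution (i : n) : ℝ := Real.exp (-(β * hH.eigenvalues i)) / partitionFunction hH β

theorem partitionFunction_pos [Nonempty n] : 0 < partitionFunction hH β :=
  Finset.sum_pos (fun _ _ => Real.exp_pos _) Finset.univ_nonempty

theorem gibbsDistribution_pos [Nonempty n] (i : n) : 0 < gibbsDistribution hH β i :=
  div_pos (Real.exp_pos _) (partitionFunction_pos hH β)

theorem sum_gibbsDistribution [Nonempty n] : ∑ i, gibbsDistribution hH β i = 1 := by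
  simp only [gibbsDistribution]
  rw [← Finset.sum_div, ← partitionFunction, div_self (partitionFunction_pos hH β).ne']

theorem log_gibbsDistribution [Nonempty n] (i : n) :
    Real.log (gibbsDistribution hH β i) =
      -(β * hH.eigenvalues i) - Real.log (partitionFunction hH β) := by
  rw [gibbsDistribution, Real.log_div (Real.exp_ne_zero _) (partitionFunction_pos hH β).ne',
    Real.log_exp]

theorem exp_neg_smul_eq_unitary_conj_diagonal :
    NormedSpace.exp (-(β : ℂ) • H) = (hH.eigenvectorUnitary : Matrix n n ℂ) *
      diagonal (fun i => (Real.exp (-(β * hH.eigenvalues i)) : ℂ)) *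
      star (hH.eigenvectorUnitary : Matrix n n ℂ) := by
  conv_lhs => rw [hH.eq_unitary_conj_diagonal, ← Matrix.smul_mul, ← Matrix.mul_smul,
    ← diagonal_smul]
  rw [exp_unitary_conj_diagonal]
  push_cast
  simp only [Pi.smul_apply, smul_eq_mul, neg_mul]

theorem gibbs_eq_unitary_conj_diagonal :
    gibbs H β = (hH.eigenvectorUnitary : Matrix n n ℂ) *
      diagonal (fun i => (gibbsDistribution hH β i : ℂ)) *
      star (hH.eigenvectorUnitary : Matrix n n ℂ) := by
  rw [gibbs, exp_neg_smul_eq_unitary_conj_diagonal hH, trace_unitary_conj, trace_diagonal,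
    ← Matrix.smul_mul, ← Matrix.mul_smul, ← diagonal_smul]
  simp only [gibbsDistribution, partitionFunction]
  push_cast
  simp only [div_eq_inv_mul]
  rfl

theorem energy_gibbs : energy H (gibbs H β) = ∑ i, hH.eigenvalues i * gibbsDistribution hH β i := by
  have hprod : H * gibbs H β = (hH.eigenvectorUnitary : Matrix n n ℂ) *
      diagonal (fun i => ((hH.eigenvalues i * gibbsDistribution hH β i : ℝ) : ℂ)) *
      star (hH.eigenvectorUnitary : Matrix n n ℂ) := by
    rw [gibbs_eq_unitary_conj_diagonal hH]
    refine (congrArg (· * _) hH.eq_unitary_conj_diagonal).trans ?_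
    simp only [Matrix.mul_assoc, ← Matrix.mul_assoc (star _) (hH.eigenvectorUnitary : Matrix n n ℂ),
      Unitary.coe_star_mul_self, Matrix.one_mul, Complex.ofReal_mul, ← diagonal_mul_diagonal]
  rw [energy, hprod, trace_unitary_conj, trace_diagonal, ← Complex.ofReal_sum, Complex.ofReal_re]

theorem vnEntropy_gibbs [Nonempty n] :
    vnEntropy (gibbs H β) = β * energy H (gibbs H β) + Real.log (partitionFunction hH β) := by
  rw [gibbs_eq_unitary_conj_diagonal hH, vnEntropy_unitary_conj_diagonal,
    ← gibbs_eq_unitary_conj_diagonal hH, energy_gibbs hH]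
  calc ∑ i, Real.negMulLog (gibbsDistribution hH β i)
      = ∑ i, (β * (hH.eigenvalues i * gibbsDistribution hH β i) +
          Real.log (partitionFunction hH β) * gibbsDistribution hH β i) := by
        refine Finset.sum_congr rfl fun i _ => ?_
        rw [Real.negMulLog, log_gibbsDistribution]
        ring
    _ = _ := by
        simp only [Finset.sum_add_distrib, ← Finset.mul_sum, sum_gibbsDistribution, mul_one]

theorem vnEntropy_le_mul_energy_add_log_partitionFunction {σ : Matrix n n ℂ} (hσ : IsDensity σ) :
    vnEntropy σ ≤ β * energy H σ + Real.log (partitionFunction hH β) := by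
  have := hσ.nonempty
  have hp := hσ.sum_eigenvalues_eq_one
  set p := hσ.1.isHermitian.eigenvalues
  set C := of fun j i => Complex.normSq
    ((star hH.eigenvectorUnitary * hσ.1.isHermitian.eigenvectorUnitary : unitaryGroup n ℂ) j i)
  have hC : C ∈ doublyStochastic ℝ n := of_normSq_mem_doublyStochastic
    (star hH.eigenvectorUnitary * hσ.1.isHermitian.eigenvectorUnitary)
  have hCp : ∑ j, ∑ i, C j i * p i = 1 := by
    rw [Finset.sum_comm]
    simp only [← Finset.sum_mul, sum_col_of_mem_doublyStochastic hC, one_mul, hp]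
  rw [vnEntropy, dif_pos hσ.1.isHermitian, energy_eq_sum_normSq hH hσ.1.isHermitian]
  calc ∑ i, Real.negMulLog (p i)
      ≤ -∑ j, ∑ i, C j i * p i * Real.log (gibbsDistribution hH β j) :=
        sum_negMulLog_le_of_mem_doublyStochastic hC hσ.1.eigenvalues_nonneg
          (gibbsDistribution_pos hH β) (by rw [hp, sum_gibbsDistribution])
    _ = β * ∑ j, ∑ i, hH.eigenvalues j * p i * C j i +
          Real.log (partitionFunction hH β) * ∑ j, ∑ i, C j i * p i := by
        simp only [log_gibbsDistribution, Finset.mul_sum, ← Finset.sum_neg_distrib,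
          ← Finset.sum_add_distrib]
        refine Finset.sum_congr rfl fun j _ => Finset.sum_congr rfl fun i _ => ?_
        ring
    _ = _ := by rw [hCp, mul_one]; rfl

end Gibbs

theorem isDensity_gibbs {H : Matrix n n ℂ} (hH : H.IsHermitian) (β : ℝ) [Nonempty n] :
    IsDensity (gibbs H β) := by
  rw [gibbs_eq_unitary_conj_diagonal hH]
  refine ⟨?_, ?_⟩
  · have hdiag : (diagonal fun i => (gibbsDistribution hH β i : ℂ)).PosSemidef :=
      posSemidef_diagonal_iff.2 fun i =>
        Complex.zero_le_real.2 (gibbsDistribution_pos hH β i).le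
    simpa only [star_eq_conjTranspose] using
      hdiag.mul_mul_conjTranspose_same (hH.eigenvectorUnitary : Matrix n n ℂ)
  · rw [trace_unitary_conj, trace_diagonal, ← Complex.ofReal_sum, sum_gibbsDistribution,
      Complex.ofReal_one]

section BoundEnergy

variable {H ρ : Matrix n n ℂ}

theorem le_boundEnergy (hρ : IsDensity ρ) {b : ℝ}
    (h : ∀ σ, IsDensity σ → vnEntropy σ = vnEntropy ρ → b ≤ energy H σ) : b ≤ boundEnergy H ρ :=
  le_csInf ⟨_, ρ, hρ, rfl, rfl⟩ fun _ ⟨σ, hσ, hS, he⟩ => he ▸ h σ hσ hS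

theorem vnEntropy_sub_log_partitionFunction_div_le_boundEnergy (hH : H.IsHermitian) {β : ℝ}
    (hβ : 0 < β) (hρ : IsDensity ρ) :
    (vnEntropy ρ - Real.log (partitionFunction hH β)) / β ≤ boundEnergy H ρ :=
  le_boundEnergy hρ fun σ hσ hS => by
    have := vnEntropy_le_mul_energy_add_log_partitionFunction hH β hσ
    rw [div_le_iff₀ hβ]
    linarith

theorem boundEnergy_le_energy (hH : H.IsHermitian) (hρ : IsDensity ρ) :
    boundEnergy H ρ ≤ energy H ρ := by
  -- any inverse temperature, here `1`, bounds the energies at fixed entropy from below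
  refine csInf_le ⟨vnEntropy ρ - Real.log (partitionFunction hH 1), ?_⟩ ⟨ρ, hρ, rfl, rfl⟩
  rintro _ ⟨σ, hσ, hS, rfl⟩
  have := vnEntropy_le_mul_energy_add_log_partitionFunction hH 1 hσ
  linarith

theorem boundEnergy_gibbs [Nonempty n] (hH : H.IsHermitian) {β : ℝ} (hβ : 0 < β) :
    boundEnergy H (gibbs H β) = energy H (gibbs H β) := by
  have hγ := isDensity_gibbs hH β
  refine le_antisymm (boundEnergy_le_energy hH hγ) ?_
  have := vnEntropy_sub_log_partitionFunction_div_le_boundEnergy hH hβ hγ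
  rwa [vnEntropy_gibbs hH, add_sub_cancel_right, mul_div_cancel_left₀ _ hβ.ne'] at this

end BoundEnergy

open Kronecker in
theorem heat_bounds_general {d : ℕ} (H : Matrix (Fin d) (Fin d) ℂ)
    (hH : H.IsHermitian) (β : ℝ) (hβ : 0 < β)
    (ρ' : Matrix (Fin d) (Fin d) ℂ) (hρ' : IsDensity ρ') :
    (1 / β) * (vnEntropy ρ' - vnEntropy (gibbs H β))
        ≤ boundEnergy H ρ' - boundEnergy H (gibbs H β) ∧
    boundEnergy H ρ' - boundEnergy H (gibbs H β)
        ≤ energy H ρ' - energy H (gibbs H β) := by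
  have := hρ'.nonempty
  have hlower := vnEntropy_sub_log_partitionFunction_div_le_boundEnergy hH hβ hρ'
  have hupper := boundEnergy_le_energy hH hρ'
  rw [boundEnergy_gibbs hH hβ]
  refine ⟨?_, by linarith⟩
  calc 1 / β * (vnEntropy ρ' - vnEntropy (gibbs H β))
      = (vnEntropy ρ' - Real.log (partitionFunction hH β)) / β - energy H (gibbs H β) := by
        rw [vnEntropy_gibbs hH]
        field_simp
        ring
    _ ≤ boundEnergy H ρ' - energy H (gibbs H β) := by linarith

open Kronecker in
/-- Bounds among notions of heat: if the environment starts in the Gibbs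
state γ_B(β) at temperature T = 1/β and ends in ρ_B', then
T·ΔS_B ≤ ΔQ ≤ ΔE_B, where ΔQ = B(ρ_B') - B(γ_B(β)) is the change of bound energy. -/
theorem heat_bounds {d : ℕ} (H : Matrix (Fin d) (Fin d) ℂ)
    (hH : H.IsHermitian) (β : ℝ) (hβ : 0 < β)
    (ρ' : Matrix (Fin d) (Fin d) ℂ) (hρ' : IsDensity ρ')
    (h0 : 0 < vnEntropy ρ') (h1 : vnEntropy ρ' < Real.log d)
    (h0' : 0 < vnEntropy (gibbs H β)) (h1' : vnEntropy (gibbs H β) < Real.log d) :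
    (1 / β) * (vnEntropy ρ' - vnEntropy (gibbs H β))
        ≤ boundEnergy H ρ' - boundEnergy H (gibbs H β) ∧
    boundEnergy H ρ' - boundEnergy H (gibbs H β)
        ≤ energy H ρ' - energy H (gibbs H β) :=
  heat_bounds_general H hH β hβ ρ' hρ'

end
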